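/- arXiv:1602.03492 — 6 statements merged into one kernel-verified Lean document; each statement's English description precedes it below -/
import Mathlib

section
/- Let n be a natural number, let A be an n×n complex Hermitian matrix, and let λ be a real number. Let ν be the measure on ℂⁿ (maps Fin n → ℂ) with density u ↦ π^{-n}·exp(-∑_j |u_j|²) with respect to Lebesgue measure. Then the matrix 1 - iλ·A is invertible and ∫_{ℂⁿ} exp(i·λ·∑_{j,k} u_j · A_{jk} · conj(u_k)) dν(u) = (det(1 - iλ·A))⁻¹. -/
/-!
By the spectral theorem `A = U diag(d) Uᴴ` with `U` unitary and `d` real, so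
`1 - iλA = U diag(w) Uᴴ` with `w = 1 - iλd`, whose entries have real part `1`. Against `ν` the
integrand becomes `π⁻ⁿ exp(-u (1 - iλA) u*)`, and the substitution `v = uU`, which preserves
Lebesgue measure because `|det U| = 1`, turns this into `∏ⱼ π⁻¹ ∫ exp(-wⱼ|z|²) dz = ∏ⱼ wⱼ⁻¹`.
-/

open MeasureTheory Matrix

theorem Complex.integral_cexp_neg_mul_norm_sq {w : ℂ} (hw : 0 < w.re) :
    ∫ z : ℂ, Complex.exp (-w * ‖z‖ ^ 2) = Real.pi / w := by
  rw [GaussianFourier.integral_cexp_neg_mul_sq_norm hw]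
  simp

namespace Matrix

variable {ι 𝕜 : Type*} [Fintype ι] [DecidableEq ι] [RCLike 𝕜]

theorem dotProduct_one_sub_smul_mulVec_star (A : Matrix ι ι 𝕜) (c : 𝕜) (u : ι → 𝕜) :
    u ⬝ᵥ ((1 - c • A) *ᵥ star u) =
      ∑ i, (‖u i‖ : 𝕜) ^ 2 - c * ∑ j, ∑ k, u j * A j k * starRingEnd 𝕜 (u k) := by
  have hself : u ⬝ᵥ star u = ∑ i, (‖u i‖ : 𝕜) ^ 2 := by simp [dotProduct, RCLike.mul_conj]
  have hform : u ⬝ᵥ (A *ᵥ star u) = ∑ j, ∑ k, u j * A j k * starRingEnd 𝕜 (u k) := by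
    simp [dotProduct, mulVec, Finset.mul_sum, mul_assoc]
  rw [sub_mulVec, one_mulVec, smul_mulVec, dotProduct_sub, dotProduct_smul, smul_eq_mul,
    hself, hform]

theorem dotProduct_mul_diagonal_mul_star_mulVec_star (U : Matrix ι ι 𝕜) (w : ι → 𝕜)
    (u : ι → 𝕜) :
    u ⬝ᵥ ((U * diagonal w * star U) *ᵥ star u) = ∑ i, w i * ‖(u ᵥ* U) i‖ ^ 2 := by
  rw [← mulVec_mulVec, ← mulVec_mulVec, dotProduct_mulVec, star_eq_conjTranspose,
    ← star_vecMul]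
  simp [dotProduct, mulVec_diagonal, RCLike.mul_conj, mul_left_comm]

theorem det_mul_diagonal_mul_star_of_mem_unitaryGroup {U : Matrix ι ι 𝕜}
    (hU : U ∈ unitaryGroup ι 𝕜) (w : ι → 𝕜) :
    (U * diagonal w * star U).det = ∏ i, w i := by
  rw [det_mul_comm, ← Matrix.mul_assoc, (mem_unitaryGroup_iff').mp hU, Matrix.one_mul,
    det_diagonal]

theorem IsHermitian.one_sub_smul_eq {A : Matrix ι ι 𝕜} (hA : A.IsHermitian) (c : 𝕜) :
    1 - c • A = (hA.eigenvectorUnitary : Matrix ι ι 𝕜) *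
      diagonal (fun i => 1 - c * hA.eigenvalues i) *
        star (hA.eigenvectorUnitary : Matrix ι ι 𝕜) := by
  conv_lhs => rw [hA.spectral_theorem]
  rw [← map_one (Unitary.conjStarAlgAut 𝕜 _ hA.eigenvectorUnitary), ← map_smul, ← map_sub,
    Unitary.conjStarAlgAut_apply, ← diagonal_one, ← diagonal_smul, ← diagonal_sub]
  rfl

theorem measurePreserving_vecMul_of_mem_unitaryGroup {U : Matrix ι ι ℂ}
    (hU : U ∈ unitaryGroup ι ℂ) : MeasurePreserving (· ᵥ* U) volume volume := by
  let f : (ι → ℂ) →ₗ[ℝ] (ι → ℂ) := (toLin' Uᵀ).restrictScalars ℝ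
  have hnorm : ‖U.det‖ = 1 := CStarRing.norm_of_mem_unitary (det_of_mem_unitary hU)
  have hdet : LinearMap.det f = 1 := by
    rw [LinearMap.det_restrictScalars, LinearMap.det_toLin', det_transpose,
      Algebra.norm_complex_apply, Complex.normSq_eq_norm_sq, hnorm, one_pow]
  have hf : (fun u : ι → ℂ => u ᵥ* U) = f := by
    ext1 u
    exact (mulVec_transpose U u).symm
  rw [hf]
  refine ⟨f.continuous_of_finiteDimensional.measurable, ?_⟩
  rw [Measure.map_linearMap_addHaar_eq_smul_addHaar _ (by simp [hdet]), hdet]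
  simp

theorem integral_cexp_neg_dotProduct_mul_diagonal_mul_star_mulVec_star {U : Matrix ι ι ℂ}
    (hU : U ∈ unitaryGroup ι ℂ) {w : ι → ℂ} (hw : ∀ i, 0 < (w i).re) :
    ∫ u : ι → ℂ, Complex.exp (-(u ⬝ᵥ ((U * diagonal w * star U) *ᵥ star u))) =
      ∏ i, Real.pi / w i := by
  have hU' := measurePreserving_vecMul_of_mem_unitaryGroup hU
  let G : (ι → ℂ) → ℂ := fun v => ∏ i, Complex.exp (-w i * ‖v i‖ ^ 2)
  have hG : Continuous G := by fun_prop
  calc ∫ u : ι → ℂ, Complex.exp (-(u ⬝ᵥ ((U * diagonal w * star U) *ᵥ star u)))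
      = ∫ u, G (u ᵥ* U) := by
        congr 1 with u
        simp only [G, dotProduct_mul_diagonal_mul_star_mulVec_star, ← Finset.sum_neg_distrib,
          Complex.exp_sum, neg_mul, RCLike.ofReal_eq_complex_ofReal]
    _ = ∫ v, G v := by
        rw [← integral_map hU'.measurable.aemeasurable hG.aestronglyMeasurable, hU'.map_eq]
    _ = ∏ i, Real.pi / w i := by
        rw [integral_fintype_prod_volume_eq_prod (f := fun i z => Complex.exp (-w i * ‖z‖ ^ 2))]
        exact Finset.prod_congr rfl fun i _ => Complex.integral_cexp_neg_mul_norm_sq (hw i)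

end Matrix

/-- For an `n × n` Hermitian matrix `A` and a real `λ`, the matrix `1 - i·λ·A` is
invertible and the Gaussian integral of `exp(i·λ·u A u*)` over `ℂⁿ` with the standard
Gaussian measure equals `det(1 - i·λ·A)⁻¹`. -/
theorem gaussian_integral_det_inv (n : ℕ) (A : Matrix (Fin n) (Fin n) ℂ)
    (hA : A.IsHermitian) (lam : ℝ)
    (ν : Measure (Fin n → ℂ))
    (hν : ν = volume.withDensity
      (fun u => ENNReal.ofReal ((Real.pi ^ n)⁻¹ * Real.exp (-∑ j, ‖u j‖ ^ 2)))) :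
    IsUnit (1 - (Complex.I * (lam : ℂ)) • A) ∧
      ∫ u : Fin n → ℂ,
          Complex.exp (Complex.I * (lam : ℂ) *
            ∑ j, ∑ k, u j * A j k * (starRingEnd ℂ) (u k)) ∂ν
        = ((1 - (Complex.I * (lam : ℂ)) • A).det)⁻¹ := by
  set c : ℂ := Complex.I * lam
  set w : Fin n → ℂ := fun i => 1 - c * hA.eigenvalues i
  set U : Matrix (Fin n) (Fin n) ℂ := (hA.eigenvectorUnitary : Matrix (Fin n) (Fin n) ℂ)
  have hB : 1 - c • A = U * diagonal w * star U := hA.one_sub_smul_eq c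
  have hw : ∀ i, 0 < (w i).re := fun i => by simp [w, c]
  have hdet : (1 - c • A).det = ∏ i, w i := by
    rw [hB, det_mul_diagonal_mul_star_of_mem_unitaryGroup hA.eigenvectorUnitary.2]
  have hdet0 : (1 - c • A).det ≠ 0 :=
    hdet ▸ Finset.prod_ne_zero_iff.mpr fun i _ h => by simpa [h] using hw i
  refine ⟨(isUnit_iff_isUnit_det _).mpr (isUnit_iff_ne_zero.mpr hdet0), ?_⟩
  calc ∫ u, Complex.exp (c * ∑ j, ∑ k, u j * A j k * (starRingEnd ℂ) (u k)) ∂ν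
      = ∫ u, (Real.pi ^ n : ℂ)⁻¹ * Complex.exp (-(u ⬝ᵥ ((1 - c • A) *ᵥ star u))) := by
        rw [hν, integral_withDensity_eq_integral_toReal_smul (by fun_prop)
          (ae_of_all _ fun _ => ENNReal.ofReal_lt_top)]
        congr 1 with u
        rw [dotProduct_one_sub_smul_mulVec_star, RCLike.ofReal_eq_complex_ofReal,
          ENNReal.toReal_ofReal (by positivity), Complex.real_smul, neg_sub, sub_eq_add_neg,
          Complex.exp_add]
        push_cast
        ring
    _ = (Real.pi ^ n : ℂ)⁻¹ * ∏ i, Real.pi / w i := by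
        rw [integral_const_mul, hB,
          integral_cexp_neg_dotProduct_mul_diagonal_mul_star_mulVec_star
            hA.eigenvectorUnitary.2 hw]
    _ = (1 - c • A).det⁻¹ := by
        rw [hdet, Finset.prod_div_distrib, Finset.prod_const, Finset.card_fin]
        field_simp
end

section
/- Let n be a natural number, let A be an n×n complex Hermitian matrix, and let λ : ℕ → ℝ be a sequence with ∑_k λ_k² < ∞. Then the family of complex numbers k ↦ exp(-i·λ_k·tr A) · (det(1 - i·λ_k·A))⁻¹ is multipliable, i.e. the infinite product ∏_{k=0}^∞ exp(-i·λ_k·tr A)·(det(1 - i·λ_k·A))⁻¹ converges. -/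
/-!
Diagonalising `A`, the `k`-th factor is the product over the eigenvalues `μ_j` of
`exp (-i t) (1 - i t)⁻¹` with `t = λ_k μ_j`. As `exp (-i t) = 1 - i t + O(t²)` and
`|1 - i t| ≥ 1`, such a factor is `1 + O(t²)`, so `∑ λ_k² < ∞` makes each of these
`n` products converge absolutely.
-/

open Matrix Complex

theorem Matrix.IsHermitian.det_one_sub_smul {𝕜 ι : Type*} [RCLike 𝕜] [Fintype ι]
    [DecidableEq ι] {A : Matrix ι ι 𝕜} (hA : A.IsHermitian) (c : 𝕜) :
    (1 - c • A).det = ∏ i, (1 - c * hA.eigenvalues i) := by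
  conv_lhs => rw [hA.spectral_theorem,
    ← map_one (Unitary.conjStarAlgAut 𝕜 _ hA.eigenvectorUnitary), ← map_smul, ← map_sub]
  rw [Unitary.conjStarAlgAut_apply, det_mul_right_comm, ← diagonal_one, ← diagonal_smul,
    diagonal_sub]
  simp

lemma norm_exp_neg_I_mul_mul_inv_one_sub_sub_one_le {t : ℝ} (ht : |t| ≤ 1) :
    ‖exp (-I * t) * (1 - I * t)⁻¹ - 1‖ ≤ t ^ 2 := by
  have hz : ‖-I * t‖ = |t| := by simp
  have hden : 1 ≤ ‖1 - I * t‖ := by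
    simpa using abs_re_le_norm (1 - I * t)
  have hden0 : (1 : ℂ) - I * t ≠ 0 := norm_pos_iff.mp (one_pos.trans_le hden)
  calc ‖exp (-I * t) * (1 - I * t)⁻¹ - 1‖
      = ‖exp (-I * t) - 1 - -I * t‖ / ‖1 - I * t‖ := by
        rw [← norm_div]; congr 1; field_simp; ring
    _ ≤ ‖exp (-I * t) - 1 - -I * t‖ := div_le_self (norm_nonneg _) hden
    _ ≤ t ^ 2 := by
        simpa [hz] using norm_exp_sub_one_sub_id_le (hz.trans_le ht)

lemma multipliable_exp_neg_I_mul_mul_inv_one_sub {ι : Type*} {t : ι → ℝ}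
    (ht : Summable fun k => t k ^ 2) :
    Multipliable fun k => exp (-I * t k) * (1 - I * t k)⁻¹ := by
  have hsmall : ∀ᶠ k in Filter.cofinite, |t k| ≤ 1 := by
    filter_upwards [ht.tendsto_cofinite_zero.eventually_le_const one_pos] with k hk
    exact (sq_le_one_iff_abs_le_one _).mp hk
  have hsum : Summable fun k => ‖exp (-I * t k) * (1 - I * t k)⁻¹ - 1‖ :=
    ht.of_norm_bounded_eventually (hsmall.mono fun k hk => by
      simpa using norm_exp_neg_I_mul_mul_inv_one_sub_sub_one_le hk)
  simpa using multipliable_one_add_of_summable hsum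

/-- If `A` is Hermitian and `∑ λ_k² < ∞`, then the family
`k ↦ exp(-i·λ_k·tr A)·det(1 - i·λ_k·A)⁻¹` is multipliable. -/
theorem multipliable_char_factors (n : ℕ) (A : Matrix (Fin n) (Fin n) ℂ)
    (hA : A.IsHermitian) (lam : ℕ → ℝ) (hlam : Summable (fun k => lam k ^ 2)) :
    Multipliable (fun k : ℕ =>
      Complex.exp (-Complex.I * (lam k : ℂ) * A.trace) *
        ((1 - (Complex.I * (lam k : ℂ)) • A).det)⁻¹) := by
  have hfactor : ∀ k, exp (-I * lam k * A.trace) * ((1 - (I * lam k) • A).det)⁻¹ =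
      ∏ j, (exp (-I * ↑(lam k * hA.eigenvalues j)) *
        (1 - I * ↑(lam k * hA.eigenvalues j))⁻¹) := by
    intro k
    rw [hA.trace_eq_sum_eigenvalues, hA.det_one_sub_smul, Finset.mul_sum, exp_sum,
      ← Finset.prod_inv_distrib, ← Finset.prod_mul_distrib]
    simp only [mul_assoc, ofReal_mul]
    -- the eigenvalues are cast by `RCLike.ofReal`, which unfolds to `Complex.ofReal`
    rfl
  refine (multipliable_prod fun j _ => multipliable_exp_neg_I_mul_mul_inv_one_sub ?_).congr
    fun k => (hfactor k).symm
  simpa [mul_pow] using hlam.mul_right (hA.eigenvalues j ^ 2)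
end

section
/- Let n be a natural number, let A be an n×n complex Hermitian matrix, and let λ : ℕ → ℝ be a sequence with ∑_k |λ_k| < ∞. Then the family k ↦ (det(1 - i·λ_k·A))⁻¹ is multipliable, and ∏_{k=0}^∞ exp(-i·λ_k·tr A)·(det(1 - i·λ_k·A))⁻¹ = exp(-i·(∑_k λ_k)·tr A) · ∏_{k=0}^∞ (det(1 - i·λ_k·A))⁻¹. -/
/-!
`z ↦ det (1 - z • M)⁻¹` is differentiable at `0` with value `1`, so `det (1 - z • M)⁻¹ - 1 = O(z)`.
Along a sequence `z k` with `∑ ‖z k‖ < ∞` the deviations from `1` are therefore summable, which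
makes the product converge. The exponential factors form a convergent product on their own,
being the exponentials of a convergent series, so the two products can be split.
-/

open Matrix Asymptotics Filter

namespace Matrix

variable {𝕜 : Type*} [NontriviallyNormedField 𝕜] {n : Type*} [Fintype n] [DecidableEq n]

theorem differentiable_det_one_sub_smul (M : Matrix n n 𝕜) :
    Differentiable 𝕜 fun z : 𝕜 => (1 - z • M).det := by
  simp only [det_apply, sub_apply, smul_apply, smul_eq_mul]
  fun_prop

theorem isBigO_inv_det_one_sub_smul_sub_one (M : Matrix n n 𝕜) :
    (fun z : 𝕜 => (1 - z • M).det⁻¹ - 1) =O[nhds 0] fun z => z := by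
  have hd : DifferentiableAt 𝕜 (fun z : 𝕜 => (1 - z • M).det⁻¹) 0 :=
    (M.differentiable_det_one_sub_smul 0).inv (by simp)
  simpa using hd.isBigO_sub

theorem multipliable_inv_det_one_sub_smul [CompleteSpace 𝕜] {ι : Type*} (M : Matrix n n 𝕜)
    {z : ι → 𝕜} (hz : Summable fun k => ‖z k‖) :
    Multipliable fun k => (1 - z k • M).det⁻¹ := by
  have hz0 : Tendsto z cofinite (nhds 0) :=
    tendsto_zero_iff_norm_tendsto_zero.mpr hz.tendsto_cofinite_zero
  have hO : (fun k => ‖(1 - z k • M).det⁻¹ - 1‖) =O[cofinite] fun k => ‖z k‖ :=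
    (M.isBigO_inv_det_one_sub_smul_sub_one.comp_tendsto hz0).norm_left.norm_right
  simpa using multipliable_one_add_of_summable (summable_of_isBigO hz hO)

end Matrix

theorem tprod_char_factors_of_summable_abs_general (n : ℕ) (A : Matrix (Fin n) (Fin n) ℂ)
    (lam : ℕ → ℝ) (hlam : Summable (fun k => |lam k|)) :
    Multipliable (fun k : ℕ => ((1 - (Complex.I * (lam k : ℂ)) • A).det)⁻¹) ∧
      (∏' k : ℕ, Complex.exp (-Complex.I * (lam k : ℂ) * A.trace) *
          ((1 - (Complex.I * (lam k : ℂ)) • A).det)⁻¹)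
        = Complex.exp (-Complex.I * ((∑' k : ℕ, lam k : ℝ) : ℂ) * A.trace) *
            ∏' k : ℕ, ((1 - (Complex.I * (lam k : ℂ)) • A).det)⁻¹ := by
  have hmult : Multipliable fun k : ℕ => ((1 - (Complex.I * (lam k : ℂ)) • A).det)⁻¹ :=
    A.multipliable_inv_det_one_sub_smul (by simpa using hlam)
  have hexp : HasProd (fun k => Complex.exp (-Complex.I * (lam k : ℂ) * A.trace))
      (Complex.exp (-Complex.I * ((∑' k : ℕ, lam k : ℝ) : ℂ) * A.trace)) :=
    (((Complex.hasSum_ofReal.mpr (summable_abs_iff.mp hlam).hasSum).mul_left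
      (-Complex.I)).mul_right A.trace).cexp
  exact ⟨hmult, by rw [hexp.multipliable.tprod_mul hmult, hexp.tprod_eq]⟩

/-- If `A` is Hermitian and `∑ |λ_k| < ∞`, then `k ↦ det(1 - i·λ_k·A)⁻¹` is
multipliable, and the infinite product with the exponential regularizing factors
can be rewritten by pulling out `exp(-i·(∑ λ_k)·tr A)`. -/
theorem tprod_char_factors_of_summable_abs (n : ℕ) (A : Matrix (Fin n) (Fin n) ℂ)
    (hA : A.IsHermitian) (lam : ℕ → ℝ) (hlam : Summable (fun k => |lam k|)) :
    Multipliable (fun k : ℕ => ((1 - (Complex.I * (lam k : ℂ)) • A).det)⁻¹) ∧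
      (∏' k : ℕ, Complex.exp (-Complex.I * (lam k : ℂ) * A.trace) *
          ((1 - (Complex.I * (lam k : ℂ)) • A).det)⁻¹)
        = Complex.exp (-Complex.I * ((∑' k : ℕ, lam k : ℝ) : ℂ) * A.trace) *
            ∏' k : ℕ, ((1 - (Complex.I * (lam k : ℂ)) • A).det)⁻¹ :=
  tprod_char_factors_of_summable_abs_general n A lam hlam
end

section
/- Let α, β, m be natural numbers with β ≤ m, and let u, v, w, z be α×α complex matrices such that the 2α×2α block matrix fromBlocks u v w z is unitary. Let I be the index type (Fin α ⊕ Fin m) ⊕ (Fin m ⊕ Fin α) and let U be the I×I complex matrix given in 4×4 block form with respect to the partition of sizes (α, m, m, α) by [[u, 0, 0, v], [0, 0, 1_m, 0], [0, 1_m, 0, 0], [w, 0, 0, z]]. Let A and B be Hermitian (α+β)×(α+β) complex matrices (indexed by Fin α ⊕ Fin β), let ι : Fin α ⊕ Fin β → I be the embedding sending the Fin α part to the first group of the partition and the Fin β part to the first β coordinates of the second group (via β ≤ m), and let Ã, B̃ be the I×I matrices with Ã(ι i, ι j) = A(i, j), B̃(ι i, ι j) = B(i, j), and all other entries zero. Let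 S be the (α+β)×(α+β) matrix fromBlocks u 0 0 0. Then for every complex number c: det(1 - c·(Ã + U·B̃·Uᴴ)) = det(1 - c·(fromBlocks A 0 0 B)·(fromBlocks 1 S Sᴴ 1)), where the right-hand side matrices are indexed by (Fin α ⊕ Fin β) ⊕ (Fin α ⊕ Fin β). -/
/-!
Let `Q = (1 : Matrix I I ℂ).submatrix ι id` be the partial isometry of the embedding `ι`, so
that `Q Qᴴ = 1`, `Ã = Qᴴ A Q`, `B̃ = Qᴴ B Q` and `S = Q U Qᴴ`. For `T = [Qᴴ | U Qᴴ]` and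
`D = A ⊕ B` we get `Ã + U B̃ Uᴴ = T D Tᴴ`, and since `U` is unitary, `Tᴴ T = [[1, S], [Sᴴ, 1]]`.
Sylvester's identity `det (1 - X Y) = det (1 - Y X)` now moves `T` across.
-/

open Matrix

/-- The big `(α + m + m + α) × (α + m + m + α)` block matrix
`[[u, 0, 0, v], [0, 0, 1, 0], [0, 1, 0, 0], [w, 0, 0, z]]`. -/
noncomputable def bigU (α m : ℕ) (u v w z : Matrix (Fin α) (Fin α) ℂ) :
    Matrix ((Fin α ⊕ Fin m) ⊕ (Fin m ⊕ Fin α)) ((Fin α ⊕ Fin m) ⊕ (Fin m ⊕ Fin α)) ℂ :=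
  Matrix.fromBlocks
    (Matrix.fromBlocks u 0 0 0)
    (Matrix.fromBlocks 0 v (1 : Matrix (Fin m) (Fin m) ℂ) 0)
    (Matrix.fromBlocks 0 (1 : Matrix (Fin m) (Fin m) ℂ) w 0)
    (Matrix.fromBlocks 0 0 0 z)

/-- The embedding of indices `Fin α ⊕ Fin β` into `(Fin α ⊕ Fin m) ⊕ (Fin m ⊕ Fin α)`,
sending the `Fin α` part to the first group and the `Fin β` part to the first `β`
coordinates of the second group. -/
def emb (α β m : ℕ) (hβ : β ≤ m) :
    Fin α ⊕ Fin β → (Fin α ⊕ Fin m) ⊕ (Fin m ⊕ Fin α) :=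
  Sum.elim (fun i => Sum.inl (Sum.inl i)) (fun j => Sum.inr (Sum.inl (Fin.castLE hβ j)))

namespace Matrix

section Semiring

variable {R n p : Type*} [Semiring R] [StarRing R] [DecidableEq p]

theorem conjTranspose_one_submatrix (e : n → p) :
    ((1 : Matrix p p R).submatrix e id)ᴴ = (1 : Matrix p p R).submatrix id e := by
  rw [conjTranspose_submatrix, conjTranspose_one]

theorem one_submatrix_mul_mul_conjTranspose [Fintype p] (e : n → p) (X : Matrix p p R) :
    (1 : Matrix p p R).submatrix e id * X * ((1 : Matrix p p R).submatrix e id)ᴴ =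
      X.submatrix e e := by
  have hleft := one_submatrix_mul e (Equiv.refl p) X
  have hright := mul_submatrix_one (Equiv.refl p) e (X.submatrix e id)
  simp only [Equiv.coe_refl, Equiv.refl_symm, Function.id_comp] at hleft hright
  rw [conjTranspose_one_submatrix, hleft, hright, submatrix_submatrix]
  rfl

theorem one_submatrix_mul_conjTranspose_self [Fintype p] [DecidableEq n] {e : n → p}
    (he : Function.Injective e) :
    (1 : Matrix p p R).submatrix e id * ((1 : Matrix p p R).submatrix e id)ᴴ = 1 := by
  simpa [submatrix_one _ he] using one_submatrix_mul_mul_conjTranspose e (1 : Matrix p p R)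

theorem submatrix_conjTranspose_one_submatrix_mul_mul [Fintype n] [Fintype p] [DecidableEq n]
    {e : n → p} (he : Function.Injective e) (M : Matrix n n R) :
    (((1 : Matrix p p R).submatrix e id)ᴴ * M * (1 : Matrix p p R).submatrix e id).submatrix e e =
      M := by
  rw [← one_submatrix_mul_mul_conjTranspose, ← Matrix.mul_assoc, ← Matrix.mul_assoc,
    one_submatrix_mul_conjTranspose_self he, Matrix.one_mul, Matrix.mul_assoc,
    one_submatrix_mul_conjTranspose_self he, Matrix.mul_one]

theorem eq_conjTranspose_one_submatrix_mul_mul [Fintype n] [Fintype p] [DecidableEq n]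
    {e : n → p} (he : Function.Injective e) {M : Matrix n n R} {X : Matrix p p R}
    (hX : ∀ i j, X (e i) (e j) = M i j)
    (hX0 : ∀ a b, (a ∉ Set.range e ∨ b ∉ Set.range e) → X a b = 0) :
    X = ((1 : Matrix p p R).submatrix e id)ᴴ * M * (1 : Matrix p p R).submatrix e id := by
  ext a b
  by_cases ha : a ∈ Set.range e
  · by_cases hb : b ∈ Set.range e
    · obtain ⟨i, rfl⟩ := ha
      obtain ⟨j, rfl⟩ := hb
      rw [hX]
      exact (congrFun₂ (submatrix_conjTranspose_one_submatrix_mul_mul he M) i j).symm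
    · rw [hX0 a b (Or.inr hb), mul_apply]
      refine (Finset.sum_eq_zero fun k _ => ?_).symm
      rw [submatrix_apply, id_eq, one_apply_ne fun h => hb ⟨k, h⟩, mul_zero]
  · rw [hX0 a b (Or.inl ha), Matrix.mul_assoc, mul_apply]
    refine (Finset.sum_eq_zero fun k _ => ?_).symm
    rw [conjTranspose_one_submatrix, submatrix_apply, id_eq,
      one_apply_ne fun h => ha ⟨k, h.symm⟩, zero_mul]

end Semiring

theorem det_one_sub_smul_conj_add_conj {R n p : Type*} [CommRing R] [StarRing R]
    [Fintype n] [Fintype p] [DecidableEq n] [DecidableEq p]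
    {Q : Matrix n p R} {U : Matrix p p R} (hQ : Q * Qᴴ = 1) (hU : Uᴴ * U = 1)
    (A B : Matrix n n R) (c : R) :
    (1 - c • (Qᴴ * A * Q + U * (Qᴴ * B * Q) * Uᴴ)).det =
      (1 - c • (fromBlocks A 0 0 B * fromBlocks 1 (Q * U * Qᴴ) (Q * U * Qᴴ)ᴴ 1)).det := by
  set T := fromCols Qᴴ (U * Qᴴ)
  have hTH : Tᴴ = fromRows Q (Q * Uᴴ) := by
    rw [conjTranspose_fromCols_eq_fromRows_conjTranspose, conjTranspose_mul,
      conjTranspose_conjTranspose]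
  have hTDT : T * fromBlocks A 0 0 B * Tᴴ = Qᴴ * A * Q + U * (Qᴴ * B * Q) * Uᴴ := by
    rw [hTH, fromCols_mul_fromBlocks, fromCols_mul_fromRows]
    simp only [Matrix.mul_zero, add_zero, zero_add, Matrix.mul_assoc]
  have hTT : Tᴴ * T = fromBlocks 1 (Q * U * Qᴴ) (Q * U * Qᴴ)ᴴ 1 := by
    rw [hTH, fromRows_mul_fromCols, hQ, conjTranspose_mul, conjTranspose_mul,
      conjTranspose_conjTranspose, Matrix.mul_assoc Q Uᴴ (U * Qᴴ), ← Matrix.mul_assoc Uᴴ U,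
      hU, Matrix.one_mul, hQ, Matrix.mul_assoc, Matrix.mul_assoc]
  calc (1 - c • (Qᴴ * A * Q + U * (Qᴴ * B * Q) * Uᴴ)).det
      = (1 - T * (c • (fromBlocks A 0 0 B * Tᴴ))).det := by
        rw [← hTDT, Matrix.mul_smul, Matrix.mul_assoc]
    _ = (1 - c • (fromBlocks A 0 0 B * Tᴴ) * T).det := det_one_sub_mul_comm _ _
    _ = _ := by rw [Matrix.smul_mul, Matrix.mul_assoc, hTT]

end Matrix

theorem emb_injective {α β m : ℕ} (hβ : β ≤ m) : Function.Injective (emb α β m hβ) :=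
  Function.Injective.sumElim (Sum.inl_injective.comp Sum.inl_injective)
    (Sum.inr_injective.comp (Sum.inl_injective.comp (Fin.castLE_injective hβ)))
    (fun _ _ => Sum.inl_ne_inr)

theorem bigU_conjTranspose_mul_self {α m : ℕ} {u v w z : Matrix (Fin α) (Fin α) ℂ}
    (h : (fromBlocks u v w z)ᴴ * fromBlocks u v w z = 1) :
    (bigU α m u v w z)ᴴ * bigU α m u v w z = 1 := by
  rw [fromBlocks_conjTranspose, fromBlocks_multiply, ← fromBlocks_one, fromBlocks_inj] at h
  obtain ⟨h11, h12, h21, h22⟩ := h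
  simp only [bigU, fromBlocks_conjTranspose, conjTranspose_zero, conjTranspose_one,
    fromBlocks_multiply, fromBlocks_add, Matrix.mul_zero, Matrix.zero_mul, Matrix.mul_one,
    add_zero, zero_add, h11, h12, h21, h22, fromBlocks_zero, fromBlocks_one]

theorem bigU_submatrix_emb {α β m : ℕ} (hβ : β ≤ m) (u v w z : Matrix (Fin α) (Fin α) ℂ) :
    (bigU α m u v w z).submatrix (emb α β m hβ) (emb α β m hβ) = fromBlocks u 0 0 0 := by
  ext (i | i) (j | j) <;> simp [bigU, emb]

theorem det_one_sub_smul_conj_eq_general (α β m : ℕ) (hβ : β ≤ m)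
    (u v w z : Matrix (Fin α) (Fin α) ℂ)
    (huvwz : Matrix.fromBlocks u v w z ∈ Matrix.unitaryGroup (Fin α ⊕ Fin α) ℂ)
    (A B : Matrix (Fin α ⊕ Fin β) (Fin α ⊕ Fin β) ℂ)
    (Atil Btil : Matrix ((Fin α ⊕ Fin m) ⊕ (Fin m ⊕ Fin α))
      ((Fin α ⊕ Fin m) ⊕ (Fin m ⊕ Fin α)) ℂ)
    (hAtil : ∀ i j, Atil (emb α β m hβ i) (emb α β m hβ j) = A i j)
    (hAtil0 : ∀ p q, (p ∉ Set.range (emb α β m hβ) ∨ q ∉ Set.range (emb α β m hβ)) →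
      Atil p q = 0)
    (hBtil : ∀ i j, Btil (emb α β m hβ i) (emb α β m hβ j) = B i j)
    (hBtil0 : ∀ p q, (p ∉ Set.range (emb α β m hβ) ∨ q ∉ Set.range (emb α β m hβ)) →
      Btil p q = 0)
    (S : Matrix (Fin α ⊕ Fin β) (Fin α ⊕ Fin β) ℂ)
    (hS : S = Matrix.fromBlocks u 0 0 0)
    (c : ℂ) :
    (1 - c • (Atil + bigU α m u v w z * Btil * (bigU α m u v w z)ᴴ)).det =
      (1 - c • (Matrix.fromBlocks A 0 0 B * Matrix.fromBlocks 1 S Sᴴ 1)).det := by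
  have hinj := emb_injective (α := α) hβ
  have hU : (bigU α m u v w z)ᴴ * bigU α m u v w z = 1 :=
    bigU_conjTranspose_mul_self (Matrix.mem_unitaryGroup_iff'.mp huvwz)
  rw [eq_conjTranspose_one_submatrix_mul_mul hinj hAtil hAtil0,
    eq_conjTranspose_one_submatrix_mul_mul hinj hBtil hBtil0,
    det_one_sub_smul_conj_add_conj (one_submatrix_mul_conjTranspose_self hinj) hU,
    one_submatrix_mul_mul_conjTranspose, bigU_submatrix_emb, hS]

/-- `det(1 - c·(Ã + U·B̃·Uᴴ)) = det(1 - c·(A ⊕ B)·[[1, S], [S*, 1]])`. -/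
theorem det_one_sub_smul_conj_eq (α β m : ℕ) (hβ : β ≤ m)
    (u v w z : Matrix (Fin α) (Fin α) ℂ)
    (huvwz : Matrix.fromBlocks u v w z ∈ Matrix.unitaryGroup (Fin α ⊕ Fin α) ℂ)
    (A B : Matrix (Fin α ⊕ Fin β) (Fin α ⊕ Fin β) ℂ)
    (hA : A.IsHermitian) (hB : B.IsHermitian)
    (Atil Btil : Matrix ((Fin α ⊕ Fin m) ⊕ (Fin m ⊕ Fin α))
      ((Fin α ⊕ Fin m) ⊕ (Fin m ⊕ Fin α)) ℂ)
    (hAtil : ∀ i j, Atil (emb α β m hβ i) (emb α β m hβ j) = A i j)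
    (hAtil0 : ∀ p q, (p ∉ Set.range (emb α β m hβ) ∨ q ∉ Set.range (emb α β m hβ)) →
      Atil p q = 0)
    (hBtil : ∀ i j, Btil (emb α β m hβ i) (emb α β m hβ j) = B i j)
    (hBtil0 : ∀ p q, (p ∉ Set.range (emb α β m hβ) ∨ q ∉ Set.range (emb α β m hβ)) →
      Btil p q = 0)
    (S : Matrix (Fin α ⊕ Fin β) (Fin α ⊕ Fin β) ℂ)
    (hS : S = Matrix.fromBlocks u 0 0 0)
    (c : ℂ) :
    (1 - c • (Atil + bigU α m u v w z * Btil * (bigU α m u v w z)ᴴ)).det =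
      (1 - c • (Matrix.fromBlocks A 0 0 B * Matrix.fromBlocks 1 S Sᴴ 1)).det :=
  det_one_sub_smul_conj_eq_general α β m hβ u v w z huvwz A B Atil Btil hAtil hAtil0 hBtil hBtil0 S
    hS c
end

section
/- Let α, β, m be natural numbers with β ≤ m, and let u, v, w, z be α×α complex matrices such that the 2α×2α block matrix fromBlocks u v w z is unitary. Let I be the index type (Fin α ⊕ Fin m) ⊕ (Fin m ⊕ Fin α) and let U be the I×I complex matrix given in 4×4 block form with respect to the partition of sizes (α, m, m, α) by [[u, 0, 0, v], [0, 0, 1_m, 0], [0, 1_m, 0, 0], [w, 0, 0, z]]. Let A and B be Hermitian (α+β)×(α+β) complex matrices (indexed by Fin α ⊕ Fin β), let ι : Fin α ⊕ Fin β → I be the embedding sending the Fin α part to the first group of the partition and the Fin β part to the first β coordinates of the second group (via β ≤ m), and let Ã, B̃ be the I×I matrices with Ã(ι i, ι j) = A(i, j), B̃(ι i, ι j) = B(i, j), and all other entries zero. Let S be the (α+β)×(α+β) matrix fromBlocks u 0 0 0. Then tr(Ã · U · B̃ · Uᴴ) = tr(A · S · B · Sᴴ). -/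
open Matrix

lemma emb_inj (α β m : ℕ) (hβ : β ≤ m) : Function.Injective (emb α β m hβ) := by
  intro i j h
  cases i <;> cases j <;> simp [emb] at h ⊢ <;> exact h

noncomputable def embMat (α β m : ℕ) (hβ : β ≤ m) :
    Matrix ((Fin α ⊕ Fin m) ⊕ (Fin m ⊕ Fin α)) (Fin α ⊕ Fin β) ℂ :=
  Matrix.of fun p i => if emb α β m hβ i = p then 1 else 0

lemma embMat_conj_eq (α β m : ℕ) (hβ : β ≤ m)
    (M : Matrix (Fin α ⊕ Fin β) (Fin α ⊕ Fin β) ℂ)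
    (Mtil : Matrix ((Fin α ⊕ Fin m) ⊕ (Fin m ⊕ Fin α))
      ((Fin α ⊕ Fin m) ⊕ (Fin m ⊕ Fin α)) ℂ)
    (hMtil : ∀ i j, Mtil (emb α β m hβ i) (emb α β m hβ j) = M i j)
    (hMtil0 : ∀ p q, (p ∉ Set.range (emb α β m hβ) ∨ q ∉ Set.range (emb α β m hβ)) →
      Mtil p q = 0) :
    Mtil = embMat α β m hβ * M * (embMat α β m hβ)ᴴ := by
  ext p q
  by_cases hp : p ∈ Set.range (emb α β m hβ)
  · by_cases hq : q ∈ Set.range (emb α β m hβ)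
    · obtain ⟨i, rfl⟩ := hp
      obtain ⟨j, rfl⟩ := hq
      rw [hMtil]
      simp only [Matrix.mul_apply, embMat, conjTranspose_apply, of_apply,
        (emb_inj α β m hβ).eq_iff]
      simp [ite_mul, mul_ite]
    · rw [hMtil0 p q (Or.inr hq)]
      simp only [Set.mem_range, not_exists] at hq
      simp [Matrix.mul_apply, embMat, hq]
  · rw [hMtil0 p q (Or.inl hp)]
    simp only [Set.mem_range, not_exists] at hp
    simp [Matrix.mul_apply, embMat, hp]

lemma embMat_U (α β m : ℕ) (hβ : β ≤ m) (u v w z : Matrix (Fin α) (Fin α) ℂ) :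
    (embMat α β m hβ)ᴴ * bigU α m u v w z * embMat α β m hβ =
      Matrix.fromBlocks u 0 0 0 := by
  have key : ∀ i j, ((embMat α β m hβ)ᴴ * bigU α m u v w z * embMat α β m hβ) i j
      = bigU α m u v w z (emb α β m hβ i) (emb α β m hβ j) := by
    intro i j
    simp only [Matrix.mul_apply, embMat, conjTranspose_apply, of_apply]
    simp [ite_mul, mul_ite, Finset.sum_ite_eq, Finset.sum_ite_eq']
  ext i j
  rw [key]
  cases i <;> cases j <;> simp [bigU, emb, Matrix.one_apply]

/-- `tr(Ã·U·B̃·Uᴴ) = tr(A·S·B·Sᴴ)`. -/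
theorem trace_conj_eq (α β m : ℕ) (hβ : β ≤ m)
    (u v w z : Matrix (Fin α) (Fin α) ℂ)
    (huvwz : Matrix.fromBlocks u v w z ∈ Matrix.unitaryGroup (Fin α ⊕ Fin α) ℂ)
    (A B : Matrix (Fin α ⊕ Fin β) (Fin α ⊕ Fin β) ℂ)
    (hA : A.IsHermitian) (hB : B.IsHermitian)
    (Atil Btil : Matrix ((Fin α ⊕ Fin m) ⊕ (Fin m ⊕ Fin α))
      ((Fin α ⊕ Fin m) ⊕ (Fin m ⊕ Fin α)) ℂ)
    (hAtil : ∀ i j, Atil (emb α β m hβ i) (emb α β m hβ j) = A i j)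
    (hAtil0 : ∀ p q, (p ∉ Set.range (emb α β m hβ) ∨ q ∉ Set.range (emb α β m hβ)) →
      Atil p q = 0)
    (hBtil : ∀ i j, Btil (emb α β m hβ i) (emb α β m hβ j) = B i j)
    (hBtil0 : ∀ p q, (p ∉ Set.range (emb α β m hβ) ∨ q ∉ Set.range (emb α β m hβ)) →
      Btil p q = 0)
    (S : Matrix (Fin α ⊕ Fin β) (Fin α ⊕ Fin β) ℂ)
    (hS : S = Matrix.fromBlocks u 0 0 0) :
    (Atil * bigU α m u v w z * Btil * (bigU α m u v w z)ᴴ).trace =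
      (A * S * B * Sᴴ).trace := by
  set E := embMat α β m hβ with hE
  set U := bigU α m u v w z with hU
  have hS' : S = Eᴴ * U * E := by rw [hS, ← embMat_U α β m hβ u v w z]
  rw [embMat_conj_eq α β m hβ A Atil hAtil hAtil0,
      embMat_conj_eq α β m hβ B Btil hBtil hBtil0, ← hE, hS']
  rw [conjTranspose_mul, conjTranspose_mul, conjTranspose_conjTranspose]
  simp only [Matrix.mul_assoc]
  rw [Matrix.trace_mul_comm]
  simp only [Matrix.mul_assoc]
end

section
/- Let α, β, m be natural numbers with β ≤ m, and let u, v, w, z be α×α complex matrices such that the 2α×2α block matrix fromBlocks u v w z is unitary. Let I be the index type (Fin α ⊕ Fin m) ⊕ (Fin m ⊕ Fin α) and let U be the I×I complex matrix given in 4×4 block form with respect to the partition of sizes (α, m, m, α) by [[u, 0, 0, v], [0, 0, 1_m, 0], [0, 1_m, 0, 0], [w, 0, 0, z]]. Let A and B be Hermitian (α+β)×(α+β) complex matrices (indexed by Fin α ⊕ Fin β), let ι : Fin α ⊕ Fin β → I be the embedding sending the Fin α part to the first group of the partition and the Fin β part to the first β coordinates of the second group (via β ≤ m), and let Ã, B̃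 be the I×I matrices with Ã(ι i, ι j) = A(i, j), B̃(ι i, ι j) = B(i, j), and all other entries zero. Let S be the (α+β)×(α+β) matrix fromBlocks u 0 0 0. Then tr((Ã + U·B̃·Uᴴ)²) = tr(((fromBlocks A 0 0 B)·(fromBlocks 1 S Sᴴ 1))²), where the right-hand side matrices are indexed by (Fin α ⊕ Fin β) ⊕ (Fin α ⊕ Fin β). -/
open Matrix

section helpers
variable {n I : Type*} [Fintype n] [Fintype I] [DecidableEq n] [DecidableEq I]

lemma sum_range_eq (f : n → I) (hf : Function.Injective f) (g : I → ℂ)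
    (h0 : ∀ p, p ∉ Set.range f → g p = 0) :
    ∑ p, g p = ∑ i, g (f i) := by
  rw [← Finset.sum_image (fun a _ b _ h => hf h)]
  refine (Finset.sum_subset (Finset.subset_univ _) ?_).symm
  intro p _ hp
  apply h0
  rintro ⟨i, rfl⟩
  exact hp (Finset.mem_image_of_mem f (Finset.mem_univ i))

lemma trace_mul_embed (f : n → I) (hf : Function.Injective f)
    (M : Matrix I I ℂ) (N : Matrix n n ℂ)
    (h1 : ∀ i j, M (f i) (f j) = N i j)
    (h0 : ∀ p q, (p ∉ Set.range f ∨ q ∉ Set.range f) → M p q = 0)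
    (X : Matrix I I ℂ) :
    (M * X).trace = ∑ i, ∑ j, N i j * X (f j) (f i) := by
  have : (M * X).trace = ∑ p, ∑ q, M p q * X q p := by
    simp [Matrix.trace, Matrix.mul_apply]
  rw [this]
  rw [sum_range_eq f hf _ (fun p hp => Finset.sum_eq_zero fun q _ => by
    rw [h0 p q (Or.inl hp), zero_mul])]
  refine Finset.sum_congr rfl fun i _ => ?_
  rw [sum_range_eq f hf _ (fun q hq => by rw [h0 (f i) q (Or.inr hq), zero_mul])]
  exact Finset.sum_congr rfl fun j _ => by rw [h1]

end helpers

/-- `tr((Ã + U·B̃·Uᴴ)²) = tr(((A ⊕ B)·[[1, S], [S*, 1]])²)`. -/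
theorem trace_sq_conj_eq (α β m : ℕ) (hβ : β ≤ m)
    (u v w z : Matrix (Fin α) (Fin α) ℂ)
    (huvwz : Matrix.fromBlocks u v w z ∈ Matrix.unitaryGroup (Fin α ⊕ Fin α) ℂ)
    (A B : Matrix (Fin α ⊕ Fin β) (Fin α ⊕ Fin β) ℂ)
    (hA : A.IsHermitian) (hB : B.IsHermitian)
    (Atil Btil : Matrix ((Fin α ⊕ Fin m) ⊕ (Fin m ⊕ Fin α))
      ((Fin α ⊕ Fin m) ⊕ (Fin m ⊕ Fin α)) ℂ)
    (hAtil : ∀ i j, Atil (emb α β m hβ i) (emb α β m hβ j) = A i j)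
    (hAtil0 : ∀ p q, (p ∉ Set.range (emb α β m hβ) ∨ q ∉ Set.range (emb α β m hβ)) →
      Atil p q = 0)
    (hBtil : ∀ i j, Btil (emb α β m hβ i) (emb α β m hβ j) = B i j)
    (hBtil0 : ∀ p q, (p ∉ Set.range (emb α β m hβ) ∨ q ∉ Set.range (emb α β m hβ)) →
      Btil p q = 0)
    (S : Matrix (Fin α ⊕ Fin β) (Fin α ⊕ Fin β) ℂ)
    (hS : S = Matrix.fromBlocks u 0 0 0) :
    (((Atil + bigU α m u v w z * Btil * (bigU α m u v w z)ᴴ)) ^ 2).trace =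
      ((Matrix.fromBlocks A 0 0 B * Matrix.fromBlocks 1 S Sᴴ 1) ^ 2).trace := by
  set f := emb α β m hβ with hf_def
  set U := bigU α m u v w z with hU_def
  have hfinj : Function.Injective f := by
    rintro (a | a) (b | b) h <;> simp only [hf_def, emb, Sum.elim_inl, Sum.elim_inr,
      Sum.inl.injEq, Sum.inr.injEq, reduceCtorEq] at h
    · exact congrArg Sum.inl h
    · exact congrArg Sum.inr (Fin.castLE_injective hβ h)
  -- component identities from unitarity
  have h := Matrix.mem_unitaryGroup_iff'.mp huvwz
  rw [Matrix.star_eq_conjTranspose, Matrix.fromBlocks_conjTranspose,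
    Matrix.fromBlocks_multiply, ← Matrix.fromBlocks_one] at h
  rw [Matrix.fromBlocks_inj] at h
  obtain ⟨h11, h12, h21, h22⟩ := h
  -- unitarity of U
  have hUunit : Uᴴ * U = 1 := by
    rw [hU_def]
    show (bigU α m u v w z)ᴴ * bigU α m u v w z = 1
    simp only [bigU, Matrix.fromBlocks_conjTranspose, Matrix.fromBlocks_multiply,
      Matrix.conjTranspose_zero, Matrix.conjTranspose_one, Matrix.mul_zero, Matrix.zero_mul,
      Matrix.mul_one, Matrix.one_mul, add_zero, zero_add, Matrix.fromBlocks_add,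
      ← Matrix.fromBlocks_one]
    rw [h11, h12, h21, h22]
    congr 1 <;> simp [← Matrix.fromBlocks_one]
  set T := U * Btil * Uᴴ with hT_def
  -- U restricted to range f equals S
  have hUf : ∀ a b, U (f a) (f b) = S a b := by
    rintro (a | a) (b | b) <;>
      simp [hU_def, hf_def, bigU, emb, hS]
  -- pointwise value of T on range f
  have hpt : ∀ a b, T (f a) (f b) = (S * B * Sᴴ) a b := by
    intro a b
    have hT : T (f a) (f b) = ∑ q, (∑ p, U (f a) p * Btil p q) * star (U (f b) q) := by
      simp [hT_def, Matrix.mul_apply, Matrix.conjTranspose_apply, Finset.sum_mul]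
    rw [hT]
    rw [sum_range_eq f hfinj _ (fun q hq => by
      rw [Finset.sum_eq_zero fun p _ => by rw [hBtil0 p q (Or.inr hq), mul_zero], zero_mul])]
    have hcol : ∀ l, (∑ p, U (f a) p * Btil p (f l)) = (S * B) a l := by
      intro l
      rw [sum_range_eq f hfinj _ (fun p hp => by rw [hBtil0 p (f l) (Or.inl hp), mul_zero])]
      rw [Matrix.mul_apply]
      exact Finset.sum_congr rfl fun k _ => by rw [hUf, hBtil]
    simp only [hcol, hUf]
    rw [Matrix.mul_apply]
    exact Finset.sum_congr rfl fun l _ => by rw [Matrix.conjTranspose_apply]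
  -- trace identities
  have key1 : (Atil * Atil).trace = (A * A).trace := by
    rw [trace_mul_embed f hfinj Atil A hAtil hAtil0 Atil]
    simp only [hAtil]
    simp [Matrix.trace, Matrix.mul_apply, mul_comm]
  have keyB : (Btil * Btil).trace = (B * B).trace := by
    rw [trace_mul_embed f hfinj Btil B hBtil hBtil0 Btil]
    simp only [hBtil]
    simp [Matrix.trace, Matrix.mul_apply, mul_comm]
  have key2 : (T * T).trace = (B * B).trace := by
    have e1 : T * T = U * (Btil * Btil * Uᴴ) := by
      rw [hT_def]
      calc U * Btil * Uᴴ * (U * Btil * Uᴴ)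
          = U * (Btil * ((Uᴴ * U) * (Btil * Uᴴ))) := by
            simp only [Matrix.mul_assoc]
        _ = U * (Btil * Btil * Uᴴ) := by rw [hUunit]; simp [Matrix.mul_assoc]
    rw [e1, Matrix.trace_mul_comm, Matrix.mul_assoc, hUunit, Matrix.mul_one, keyB]
  have key3 : (Atil * T).trace = (A * (S * B * Sᴴ)).trace := by
    rw [trace_mul_embed f hfinj Atil A hAtil hAtil0 T]
    simp only [hpt]
    simp [Matrix.trace, Matrix.mul_apply, mul_comm]
  -- assemble LHS
  have lhs_eq : (((Atil + T)) ^ 2).trace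
      = (A * A).trace + (B * B).trace + 2 * (A * (S * B * Sᴴ)).trace := by
    rw [pow_two, add_mul, mul_add, mul_add, Matrix.trace_add, Matrix.trace_add,
      Matrix.trace_add, key1, key2, Matrix.trace_mul_comm T Atil, key3]
    ring
  -- assemble RHS
  have rhs_eq : ((Matrix.fromBlocks A 0 0 B * Matrix.fromBlocks 1 S Sᴴ 1) ^ 2).trace
      = (A * A).trace + (B * B).trace + 2 * (A * (S * B * Sᴴ)).trace := by
    have hm : Matrix.fromBlocks A 0 0 B * Matrix.fromBlocks 1 S Sᴴ 1
        = Matrix.fromBlocks A (A * S) (B * Sᴴ) B := by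
      simp [Matrix.fromBlocks_multiply]
    rw [hm, pow_two, Matrix.fromBlocks_multiply]
    have htr : ∀ (P Q R W : Matrix (Fin α ⊕ Fin β) (Fin α ⊕ Fin β) ℂ),
        (Matrix.fromBlocks P Q R W).trace = P.trace + W.trace := by
      intro P Q R W
      simp [Matrix.trace, Fintype.sum_sum_type]
    rw [htr, Matrix.trace_add, Matrix.trace_add]
    rw [Matrix.trace_mul_comm (B * Sᴴ) (A * S)]
    have : (A * S * (B * Sᴴ)).trace = (A * (S * B * Sᴴ)).trace := by
      simp [Matrix.mul_assoc]
    rw [this]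
    ring
  rw [lhs_eq, rhs_eq]
end
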